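/- arXiv:1503.02299 — 2 statements merged into one kernel-verified Lean document; each statement's English description precedes it below -/
import Mathlib

section
/- For every $f$ in the atomic Hardy space $H^1_k(\mathbb{R}^d)$ (with atoms supported in closed balls centered at the origin), one has $\|\mathcal{H}_k f\|_{L^1(\nu_k)} \leq 2\, \|f\|_{H^1_k}$. -/
open MeasureTheory Metric Filter Topology Set

noncomputable section

/-- The Dunkl weight function. -/
def dunklWeight {d : ℕ} (Rp : Finset (EuclideanSpace ℝ (Fin d)))
    (k : EuclideanSpace ℝ (Fin d) → ℝ) (x : EuclideanSpace ℝ (Fin d)) : ℝ :=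
  ∏ ξ ∈ Rp, |(inner ℝ ξ x : ℝ)| ^ (2 * k ξ)

/-- The weighted measure `ν_k`. -/
def dunklMeasure {d : ℕ} (Rp : Finset (EuclideanSpace ℝ (Fin d)))
    (k : EuclideanSpace ℝ (Fin d) → ℝ) : Measure (EuclideanSpace ℝ (Fin d)) :=
  volume.withDensity fun x => ENNReal.ofReal (dunklWeight Rp k x)

/-- An `L²_k`-atom supported in the closed ball of center `x₀` and radius `r`. -/
def IsL2Atom {d : ℕ} (ν : Measure (EuclideanSpace ℝ (Fin d)))
    (a : EuclideanSpace ℝ (Fin d) → ℝ) (x₀ : EuclideanSpace ℝ (Fin d)) (r : ℝ) : Prop :=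
  MemLp a 2 ν ∧ Function.support a ⊆ closedBall x₀ r ∧
    (∫ x, |a x| ^ 2 ∂ν) ^ ((1 : ℝ)/2) ≤ (ν (closedBall x₀ r)).toReal ^ (-(1 : ℝ)/2) ∧
    ∫ x in closedBall x₀ r, a x ∂ν = 0

/-- The Hardy-type averaging operator `H_k`. -/
def hardyOp {d : ℕ} (ν : Measure (EuclideanSpace ℝ (Fin d)))
    (f : EuclideanSpace ℝ (Fin d) → ℝ) (x : EuclideanSpace ℝ (Fin d)) : ℝ :=
  (ν (closedBall 0 ‖x‖)).toReal⁻¹ * ∫ y in closedBall (0 : EuclideanSpace ℝ (Fin d)) ‖x‖, f y ∂ν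


/-- `f = ∑_j λ_j a_j` is an atomic decomposition with `L²_k`-atoms supported in closed
balls centered at the origin, the series converging in `L¹(ν_k)` and in `L²(ν_k)`,
and `∑_j |λ_j| < ∞`. -/
def IsAtomicDecompO {d : ℕ} (ν : Measure (EuclideanSpace ℝ (Fin d)))
    (f : EuclideanSpace ℝ (Fin d) → ℝ) (lam : ℕ → ℝ)
    (a : ℕ → EuclideanSpace ℝ (Fin d) → ℝ) : Prop :=
  (∀ j, ∃ R : ℝ, 0 < R ∧ IsL2Atom ν (a j) 0 R) ∧
    Summable (fun j => |lam j|) ∧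
    Tendsto (fun N => eLpNorm (fun x => f x - ∑ j ∈ Finset.range N, lam j * a j x) 1 ν)
      atTop (nhds 0) ∧
    Tendsto (fun N => eLpNorm (fun x => f x - ∑ j ∈ Finset.range N, lam j * a j x) 2 ν)
      atTop (nhds 0)

/-- `f` belongs to the atomic Hardy space `H¹_k` (atoms centered at the origin). -/
def MemH1O {d : ℕ} (ν : Measure (EuclideanSpace ℝ (Fin d)))
    (f : EuclideanSpace ℝ (Fin d) → ℝ) : Prop :=
  MemLp f 1 ν ∧ MemLp f 2 ν ∧ ∃ lam a, IsAtomicDecompO ν f lam a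

/-- The atomic `H¹_k` norm: infimum of `∑_j |λ_j|` over all atomic decompositions. -/
def H1normO {d : ℕ} (ν : Measure (EuclideanSpace ℝ (Fin d)))
    (f : EuclideanSpace ℝ (Fin d) → ℝ) : ℝ :=
  sInf {s : ℝ | ∃ lam a, IsAtomicDecompO ν f lam a ∧ s = ∑' j, |lam j|}

open scoped ENNReal

/-!
Write `φ(x) = ν(B_{‖x‖})`. A sublevel set `{φ < c}` is an increasing union of centred balls
of measure `< c`, so `ν {φ < c} ≤ c`; by the layer-cake formula this gives
`∫_S φ^{-1/2} dν ≤ 2 ν(S)^{1/2}` for every set `S`.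
If `a` is an atom on `B_R`, its vanishing mean makes `H a` vanish off `B_R`, while Cauchy–Schwarz
gives `|H a(x)| ≤ φ(x)^{-1/2} ν(B_R)^{-1/2}`; hence `‖H a‖₁ ≤ 2`. For `f = ∑ λⱼ aⱼ`, `H` of the
partial sums converges pointwise to `H f` because `|H g(x)| ≤ ‖g‖₁ / φ(x)`, and Fatou's lemma
gives `‖H f‖₁ ≤ 2 ∑ |λⱼ|`.
-/

theorem ENNReal.rpow_mul_rpow_le_rpow_add (x : ℝ≥0∞) (y z : ℝ) : x ^ y * x ^ z ≤ x ^ (y + z) := by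
  rcases eq_or_ne x 0 with rfl | hx0
  · simp only [ENNReal.zero_rpow_def]
    split_ifs <;> first | (simp; done) | (exfalso; grind)
  rcases eq_or_ne x ⊤ with rfl | hxtop
  · simp only [ENNReal.top_rpow_def]
    split_ifs <;> first | (simp; done) | (exfalso; grind)
  rw [ENNReal.rpow_add _ _ hx0 hxtop]

theorem lintegral_Ioi_min_ofReal_rpow_neg_two_le (M : ℝ≥0∞) :
    ∫⁻ t in Ioi (0 : ℝ), min M (ENNReal.ofReal (t ^ (-2 : ℝ))) ≤ 2 * M ^ ((1 : ℝ) / 2) := by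
  rcases eq_or_ne M 0 with rfl | hM0
  · simp
  rcases eq_or_ne M ⊤ with rfl | hMtop
  · simp
  set m := M.toReal
  have hm : 0 < m := ENNReal.toReal_pos hM0 hMtop
  set T := m ^ (-(1 : ℝ) / 2)
  have hT : 0 < T := Real.rpow_pos_of_pos hm _
  -- `T = M^{-1/2}` balances the two pieces, each contributes `√M`
  have hsqrt : M ^ ((1 : ℝ) / 2) = ENNReal.ofReal (m ^ ((1 : ℝ) / 2)) := by
    rw [← ENNReal.ofReal_rpow_of_pos hm, ENNReal.ofReal_toReal hMtop]
  have hnear : ∫⁻ t in Ioc 0 T, min M (ENNReal.ofReal (t ^ (-2 : ℝ))) ≤ M ^ ((1 : ℝ) / 2) :=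
    calc ∫⁻ t in Ioc 0 T, min M (ENNReal.ofReal (t ^ (-2 : ℝ)))
        ≤ ∫⁻ _ in Ioc 0 T, M := lintegral_mono fun t => min_le_left _ _
      _ = ENNReal.ofReal (m * T) := by
        rw [setLIntegral_const, Real.volume_Ioc, sub_zero, ENNReal.ofReal_mul hm.le,
          ENNReal.ofReal_toReal hMtop]
      _ = M ^ ((1 : ℝ) / 2) := by
        rw [hsqrt, ← Real.rpow_one_add' hm.le (by norm_num)]
        norm_num
  have hfar : ∫⁻ t in Ioi T, min M (ENNReal.ofReal (t ^ (-2 : ℝ))) ≤ M ^ ((1 : ℝ) / 2) :=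
    calc ∫⁻ t in Ioi T, min M (ENNReal.ofReal (t ^ (-2 : ℝ)))
        ≤ ∫⁻ t in Ioi T, ENNReal.ofReal (t ^ (-2 : ℝ)) := lintegral_mono fun t => min_le_right _ _
      _ = ENNReal.ofReal (∫ t in Ioi T, t ^ (-2 : ℝ)) :=
        (ofReal_integral_eq_lintegral_ofReal (integrableOn_Ioi_rpow_of_lt (by norm_num) hT)
          (ae_restrict_of_forall_mem measurableSet_Ioi fun t ht =>
            Real.rpow_nonneg (hT.trans ht).le _)).symm
      _ = M ^ ((1 : ℝ) / 2) := by
        rw [integral_Ioi_rpow_of_lt (by norm_num) hT, hsqrt, ← Real.rpow_mul hm.le]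
        norm_num
  calc ∫⁻ t in Ioi 0, min M (ENNReal.ofReal (t ^ (-2 : ℝ)))
      = (∫⁻ t in Ioc 0 T, min M (ENNReal.ofReal (t ^ (-2 : ℝ)))) +
          ∫⁻ t in Ioi T, min M (ENNReal.ofReal (t ^ (-2 : ℝ))) := by
        rw [← Ioc_union_Ioi_eq_Ioi hT.le, lintegral_union measurableSet_Ioi Ioc_disjoint_Ioi_same]
    _ ≤ M ^ ((1 : ℝ) / 2) + M ^ ((1 : ℝ) / 2) := add_le_add hnear hfar
    _ = 2 * M ^ ((1 : ℝ) / 2) := (two_mul _).symm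

section Distribution

variable {E : Type*} [NormedAddCommGroup E] [MeasurableSpace E]

theorem measurable_measure_closedBall_norm [OpensMeasurableSpace E] (ν : Measure E) :
    Measurable fun x : E => ν (closedBall 0 ‖x‖) :=
  (Monotone.measurable fun _ _ h => measure_mono (closedBall_subset_closedBall h)).comp
    measurable_norm

theorem measure_setOf_measure_closedBall_norm_lt_le (ν : Measure E) (c : ℝ≥0∞) :
    ν {x : E | ν (closedBall 0 ‖x‖) < c} ≤ c := by
  set S := {x : E | ν (closedBall (0 : E) ‖x‖) < c}
  by_cases hmax : ∃ x₀ ∈ S, ∀ x ∈ S, ‖x‖ ≤ ‖x₀‖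
  · obtain ⟨x₀, hx₀, hmax⟩ := hmax
    calc ν S ≤ ν (closedBall 0 ‖x₀‖) :=
          measure_mono fun x hx => mem_closedBall_zero_iff.mpr (hmax x hx)
      _ ≤ c := hx₀.le
  push Not at hmax
  -- without a largest ball, `S` is a countable increasing union of balls of measure `< c`
  let Q := {q : ℚ // ∃ y ∈ S, (q : ℝ) ≤ ‖y‖}
  have hmono : Monotone fun q : Q => closedBall (0 : E) (q : ℚ) := fun q q' h =>
    closedBall_subset_closedBall (by exact_mod_cast h)
  have hcover : S ⊆ ⋃ q : Q, closedBall 0 (q : ℚ) := by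
    intro x hx
    obtain ⟨y, hy, hxy⟩ := hmax x hx
    obtain ⟨q, hxq, hqy⟩ := exists_rat_btwn hxy
    exact mem_iUnion.mpr ⟨⟨q, y, hy, hqy.le⟩, mem_closedBall_zero_iff.mpr hxq.le⟩
  calc ν S ≤ ν (⋃ q : Q, closedBall 0 (q : ℚ)) := measure_mono hcover
    _ = ⨆ q : Q, ν (closedBall 0 (q : ℚ)) := hmono.directed_le.measure_iUnion
    _ ≤ c := iSup_le fun ⟨q, y, hy, hqy⟩ =>
          (measure_mono (closedBall_subset_closedBall hqy)).trans hy.le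

theorem ae_measure_closedBall_norm_ne_zero (ν : Measure E) :
    ∀ᵐ x ∂ν, ν (closedBall 0 ‖x‖) ≠ 0 := by
  refine ae_iff.mpr (nonpos_iff_eq_zero.mp (ENNReal.le_of_forall_pos_le_add fun ε hε _ => ?_))
  calc ν {x | ¬ν (closedBall 0 ‖x‖) ≠ 0} ≤ ν {x | ν (closedBall 0 ‖x‖) < ε} :=
        measure_mono fun x hx => by simp_all
    _ ≤ 0 + ε := by simpa using measure_setOf_measure_closedBall_norm_lt_le ν ε

theorem lintegral_measure_closedBall_norm_rpow_neg_half_le [OpensMeasurableSpace E]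
    (ν : Measure E) (s : Set E) :
    ∫⁻ x in s, ν (closedBall 0 ‖x‖) ^ (-(1 : ℝ) / 2) ∂ν ≤ 2 * ν s ^ ((1 : ℝ) / 2) := by
  set φ := fun x : E => ν (closedBall 0 ‖x‖)
  set h := fun x => (φ x ^ (-(1 : ℝ) / 2)).toReal
  have hanti : ∀ {a b : ℝ≥0∞}, a ≤ b → b ^ (-(1 : ℝ) / 2) ≤ a ^ (-(1 : ℝ) / 2) := fun hab => by
    rw [neg_div, ENNReal.rpow_neg, ENNReal.rpow_neg]
    exact ENNReal.inv_le_inv.mpr (ENNReal.rpow_le_rpow hab (by norm_num))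
  have hlevel : ∀ t : ℝ, 0 < t → {x | t < h x} ⊆ {x | φ x < ENNReal.ofReal (t ^ (-2 : ℝ))} := by
    intro t ht x hx
    by_contra hle
    have hroot : ENNReal.ofReal (t ^ (-2 : ℝ)) ^ (-(1 : ℝ) / 2) = ENNReal.ofReal t := by
      rw [ENNReal.ofReal_rpow_of_pos (Real.rpow_pos_of_pos ht _), ← Real.rpow_mul ht.le]
      norm_num
    have := ENNReal.toReal_le_of_le_ofReal ht.le (hroot ▸ hanti (not_lt.mp hle))
    exact (not_lt.mpr this) hx
  calc ∫⁻ x in s, φ x ^ (-(1 : ℝ) / 2) ∂ν = ∫⁻ x in s, ENNReal.ofReal (h x) ∂ν := by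
        refine lintegral_congr_ae ?_
        filter_upwards [ae_restrict_of_ae (ae_measure_closedBall_norm_ne_zero ν)] with x hx
        exact (ENNReal.ofReal_toReal (by rw [Ne, ENNReal.rpow_eq_top_iff]; norm_num; exact hx)).symm
    _ = ∫⁻ t in Ioi 0, ν.restrict s {x | t < h x} :=
        lintegral_eq_lintegral_meas_lt _ (ae_of_all _ fun x => ENNReal.toReal_nonneg)
          ((measurable_measure_closedBall_norm ν).pow_const _).ennreal_toReal.aemeasurable
    _ ≤ ∫⁻ t in Ioi 0, min (ν s) (ENNReal.ofReal (t ^ (-2 : ℝ))) :=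
        setLIntegral_mono' measurableSet_Ioi fun t ht => le_min
          ((measure_mono (subset_univ _)).trans_eq (Measure.restrict_apply_univ s))
          ((Measure.restrict_le_self _).trans (measure_mono (hlevel t ht))
            |>.trans (measure_setOf_measure_closedBall_norm_lt_le ν _))
    _ ≤ 2 * ν s ^ ((1 : ℝ) / 2) := lintegral_Ioi_min_ofReal_rpow_neg_two_le _

end Distribution

section HardyOperator

variable {d : ℕ} {ν : Measure (EuclideanSpace ℝ (Fin d))}

theorem enorm_hardyOp_le (g : EuclideanSpace ℝ (Fin d) → ℝ) (x : EuclideanSpace ℝ (Fin d)) :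
    ‖hardyOp ν g x‖ₑ ≤
      ‖(ν (closedBall 0 ‖x‖)).toReal⁻¹‖ₑ * ∫⁻ y in closedBall 0 ‖x‖, ‖g y‖ₑ ∂ν := by
  rw [hardyOp, enorm_mul]
  gcongr
  exact enorm_integral_le_lintegral_enorm _

theorem enorm_hardyOp_le_rpow_mul_eLpNorm {g : EuclideanSpace ℝ (Fin d) → ℝ}
    (hg : AEStronglyMeasurable g ν) (x : EuclideanSpace ℝ (Fin d)) :
    ‖hardyOp ν g x‖ₑ ≤ ν (closedBall 0 ‖x‖) ^ (-(1 : ℝ) / 2) * eLpNorm g 2 ν := by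
  set B := closedBall (0 : EuclideanSpace ℝ (Fin d)) ‖x‖
  have hinv : ‖(ν B).toReal⁻¹‖ₑ ≤ (ν B)⁻¹ := by
    rw [← ENNReal.toReal_inv, Real.enorm_of_nonneg ENNReal.toReal_nonneg]
    exact ENNReal.ofReal_toReal_le
  have hholder : ∫⁻ y in B, ‖g y‖ₑ ∂ν ≤ eLpNorm g 2 ν * ν B ^ ((1 : ℝ) / 2) := by
    have := eLpNorm_le_eLpNorm_mul_rpow_measure_univ (p := 1) (q := 2) one_le_two
      (hg.restrict (s := B))
    rw [eLpNorm_one_eq_lintegral_enorm, Measure.restrict_apply_univ] at this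
    refine this.trans ?_
    norm_num
    gcongr
    exact Measure.restrict_le_self
  calc ‖hardyOp ν g x‖ₑ ≤ (ν B)⁻¹ * (eLpNorm g 2 ν * ν B ^ ((1 : ℝ) / 2)) :=
        (enorm_hardyOp_le g x).trans (mul_le_mul' hinv hholder)
    _ = (ν B ^ (-1 : ℝ) * ν B ^ ((1 : ℝ) / 2)) * eLpNorm g 2 ν := by
        rw [ENNReal.rpow_neg_one]; ring
    _ ≤ ν B ^ (-(1 : ℝ) / 2) * eLpNorm g 2 ν := by
        gcongr
        exact (ENNReal.rpow_mul_rpow_le_rpow_add _ _ _).trans_eq (by norm_num)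

theorem measurable_hardyOp {g : EuclideanSpace ℝ (Fin d) → ℝ} (hg : Integrable g ν) :
    Measurable (hardyOp ν g) := by
  have hmono : ∀ {h : EuclideanSpace ℝ (Fin d) → ℝ}, Integrable h ν → 0 ≤ h →
      Measurable fun x : EuclideanSpace ℝ (Fin d) => ∫ y in closedBall 0 ‖x‖, h y ∂ν :=
    fun hh h0 => (Monotone.measurable fun _ _ hr => setIntegral_mono_set hh.integrableOn
      (ae_of_all _ h0) (closedBall_subset_closedBall hr).eventuallyLE).comp measurable_norm
  have hsplit : hardyOp ν g = fun x => (ν (closedBall 0 ‖x‖)).toReal⁻¹ *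
      ((∫ y in closedBall 0 ‖x‖, max (g y) 0 ∂ν) - ∫ y in closedBall 0 ‖x‖, max (-g y) 0 ∂ν) :=
    funext fun x => by
      rw [hardyOp, ← integral_sub hg.pos_part.integrableOn hg.neg_part.integrableOn]
      simp_rw [max_zero_sub_max_neg_zero_eq_self]
  rw [hsplit]
  exact (measurable_measure_closedBall_norm ν).ennreal_toReal.inv.mul
    ((hmono hg.pos_part fun _ => le_max_right _ _).sub
      (hmono hg.neg_part fun _ => le_max_right _ _))

theorem hardyOp_sub {f g : EuclideanSpace ℝ (Fin d) → ℝ} (hf : Integrable f ν)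
    (hg : Integrable g ν) (x : EuclideanSpace ℝ (Fin d)) :
    hardyOp ν (fun y => f y - g y) x = hardyOp ν f x - hardyOp ν g x := by
  rw [hardyOp, hardyOp, hardyOp, integral_sub hf.integrableOn hg.integrableOn, mul_sub]

theorem hardyOp_finset_sum {ι : Type*} (s : Finset ι) (c : ι → ℝ)
    {a : ι → EuclideanSpace ℝ (Fin d) → ℝ} (ha : ∀ j ∈ s, Integrable (a j) ν)
    (x : EuclideanSpace ℝ (Fin d)) :
    hardyOp ν (fun y => ∑ j ∈ s, c j * a j y) x = ∑ j ∈ s, c j * hardyOp ν (a j) x := by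
  simp_rw [hardyOp, integral_finsetSum s fun j hj => ((ha j hj).const_mul (c j)).integrableOn,
    integral_const_mul, Finset.mul_sum]
  ring_nf

theorem IsL2Atom.eLpNorm_le {a : EuclideanSpace ℝ (Fin d) → ℝ} {x₀ : EuclideanSpace ℝ (Fin d)}
    {r : ℝ} (ha : IsL2Atom ν a x₀ r) :
    eLpNorm a 2 ν ≤ ν (closedBall x₀ r) ^ (-(1 : ℝ) / 2) := by
  obtain ⟨hL2, -, hnorm, -⟩ := ha
  rw [hL2.eLpNorm_eq_integral_rpow_norm two_ne_zero ENNReal.ofNat_ne_top]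
  calc ENNReal.ofReal ((∫ x, ‖a x‖ ^ (2 : ℝ≥0∞).toReal ∂ν) ^ (2 : ℝ≥0∞).toReal⁻¹)
      ≤ ENNReal.ofReal ((ν (closedBall x₀ r)).toReal ^ (-(1 : ℝ) / 2)) := by
        gcongr
        convert hnorm using 3 <;> norm_num
    _ ≤ ν (closedBall x₀ r) ^ (-(1 : ℝ) / 2) := by
        rw [ENNReal.toReal_rpow]
        exact ENNReal.ofReal_toReal_le

theorem IsL2Atom.integrable {a : EuclideanSpace ℝ (Fin d) → ℝ} {x₀ : EuclideanSpace ℝ (Fin d)}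
    {r : ℝ} (ha : IsL2Atom ν a x₀ r) : Integrable a ν := by
  rcases eq_or_ne (ν (closedBall x₀ r)) ⊤ with htop | hfin
  · -- `(ν (closedBall x₀ r)).toReal = 0`, so the normalisation forces `a = 0` a.e.
    have h0 : eLpNorm a 2 ν = 0 :=
      nonpos_iff_eq_zero.mp (ha.eLpNorm_le.trans_eq (by rw [htop]; norm_num))
    exact (integrable_zero _ _ ν).congr
      ((eLpNorm_eq_zero_iff ha.1.aestronglyMeasurable two_ne_zero).mp h0).symm
  · have := isFiniteMeasure_restrict.mpr hfin
    exact (integrableOn_iff_integrable_of_support_subset ha.2.1).mp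
      ((ha.1.restrict _).integrable one_le_two)

theorem IsL2Atom.hardyOp_eq_zero {a : EuclideanSpace ℝ (Fin d) → ℝ} {R : ℝ}
    (ha : IsL2Atom ν a 0 R) {x : EuclideanSpace ℝ (Fin d)}
    (hx : R ≤ ‖x‖) : hardyOp ν a x = 0 := by
  have hout : ∀ {s}, closedBall 0 R ⊆ s → ∀ y ∉ s, a y = 0 := fun hs y hy =>
    Function.notMem_support.mp fun h => hy (hs (ha.2.1 h))
  rw [hardyOp, setIntegral_eq_integral_of_forall_compl_eq_zero
    (hout (closedBall_subset_closedBall hx)), ← setIntegral_eq_integral_of_forall_compl_eq_zero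
    (hout subset_rfl), ha.2.2.2, mul_zero]

theorem IsL2Atom.lintegral_enorm_hardyOp_le_two {a : EuclideanSpace ℝ (Fin d) → ℝ} {R : ℝ}
    (ha : IsL2Atom ν a 0 R) : ∫⁻ x, ‖hardyOp ν a x‖ₑ ∂ν ≤ 2 := by
  set M := ν (closedBall 0 R)
  have hsupp : Function.support (fun x => ‖hardyOp ν a x‖ₑ) ⊆ closedBall 0 R := fun x hx => by
    by_contra hout
    exact hx (by simp [ha.hardyOp_eq_zero (not_le.mp (mt mem_closedBall_zero_iff.mpr hout)).le])
  calc ∫⁻ x, ‖hardyOp ν a x‖ₑ ∂ν = ∫⁻ x in closedBall 0 R, ‖hardyOp ν a x‖ₑ ∂ν :=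
        (setLIntegral_eq_of_support_subset hsupp).symm
    _ ≤ ∫⁻ x in closedBall 0 R, ν (closedBall 0 ‖x‖) ^ (-(1 : ℝ) / 2) * M ^ (-(1 : ℝ) / 2) ∂ν :=
        lintegral_mono fun x =>
          (enorm_hardyOp_le_rpow_mul_eLpNorm ha.1.aestronglyMeasurable x).trans
            (by gcongr; exact ha.eLpNorm_le)
    _ = (∫⁻ x in closedBall 0 R, ν (closedBall 0 ‖x‖) ^ (-(1 : ℝ) / 2) ∂ν) * M ^ (-(1 : ℝ) / 2) :=
        lintegral_mul_const _ ((measurable_measure_closedBall_norm ν).pow_const _)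
    _ ≤ 2 * M ^ ((1 : ℝ) / 2) * M ^ (-(1 : ℝ) / 2) := by
        gcongr
        exact lintegral_measure_closedBall_norm_rpow_neg_half_le ν _
    _ ≤ 2 * M ^ ((1 : ℝ) / 2 + -(1 : ℝ) / 2) := by
        rw [mul_assoc]
        gcongr
        exact ENNReal.rpow_mul_rpow_le_rpow_add _ _ _
    _ = 2 := by norm_num

theorem tendsto_hardyOp_of_tendsto_eLpNorm_one {ι : Type*} {l : Filter ι}
    {f : EuclideanSpace ℝ (Fin d) → ℝ} {g : ι → EuclideanSpace ℝ (Fin d) → ℝ}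
    (hf : Integrable f ν) (hg : ∀ i, Integrable (g i) ν)
    (hfg : Tendsto (fun i => eLpNorm (fun y => f y - g i y) 1 ν) l (𝓝 0))
    (x : EuclideanSpace ℝ (Fin d)) :
    Tendsto (fun i => hardyOp ν (g i) x) l (𝓝 (hardyOp ν f x)) := by
  set C := ‖(ν (closedBall 0 ‖x‖)).toReal⁻¹‖ₑ
  have hbound : ∀ i, edist (hardyOp ν (g i) x) (hardyOp ν f x) ≤
      C * eLpNorm (fun y => f y - g i y) 1 ν := fun i => by
    rw [edist_comm, edist_eq_enorm_sub, ← hardyOp_sub hf (hg i), eLpNorm_one_eq_lintegral_enorm]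
    exact (enorm_hardyOp_le _ x).trans (by gcongr; exact Measure.restrict_le_self)
  have hC : Tendsto (fun i => C * eLpNorm (fun y => f y - g i y) 1 ν) l (𝓝 0) := by
    simpa using ENNReal.Tendsto.const_mul hfg (Or.inr enorm_ne_top)
  exact tendsto_iff_edist_tendsto_0.mpr
    (tendsto_of_tendsto_of_tendsto_of_le_of_le tendsto_const_nhds hC (fun _ => bot_le) hbound)

theorem lintegral_enorm_hardyOp_sum_atoms_le {ι : Type*} (s : Finset ι) (c : ι → ℝ)
    {a : ι → EuclideanSpace ℝ (Fin d) → ℝ} {R : ι → ℝ} (ha : ∀ j ∈ s, IsL2Atom ν (a j) 0 (R j)) :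
    ∫⁻ x, ‖hardyOp ν (fun y => ∑ j ∈ s, c j * a j y) x‖ₑ ∂ν ≤ 2 * ∑ j ∈ s, ‖c j‖ₑ := by
  have hmeas : ∀ j ∈ s, Measurable fun x => ‖hardyOp ν (a j) x‖ₑ := fun j hj =>
    (measurable_hardyOp (ha j hj).integrable).enorm
  calc ∫⁻ x, ‖hardyOp ν (fun y => ∑ j ∈ s, c j * a j y) x‖ₑ ∂ν
      ≤ ∫⁻ x, ∑ j ∈ s, ‖c j‖ₑ * ‖hardyOp ν (a j) x‖ₑ ∂ν := lintegral_mono fun x => by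
        rw [hardyOp_finset_sum s c (fun j hj => (ha j hj).integrable)]
        exact (enorm_sum_le _ _).trans_eq (by simp_rw [enorm_mul])
    _ = ∑ j ∈ s, ‖c j‖ₑ * ∫⁻ x, ‖hardyOp ν (a j) x‖ₑ ∂ν := by
        rw [lintegral_finsetSum _ fun j hj => (hmeas j hj).const_mul _]
        exact Finset.sum_congr rfl fun j hj => lintegral_const_mul _ (hmeas j hj)
    _ ≤ ∑ j ∈ s, ‖c j‖ₑ * 2 := by
        gcongr with j hj
        exact (ha j hj).lintegral_enorm_hardyOp_le_two
    _ = 2 * ∑ j ∈ s, ‖c j‖ₑ := by rw [← Finset.sum_mul, mul_comm]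

theorem IsAtomicDecompO.lintegral_enorm_hardyOp_le {f : EuclideanSpace ℝ (Fin d) → ℝ}
    {lam : ℕ → ℝ} {a : ℕ → EuclideanSpace ℝ (Fin d) → ℝ} (hf : Integrable f ν)
    (hdec : IsAtomicDecompO ν f lam a) :
    ∫⁻ x, ‖hardyOp ν f x‖ₑ ∂ν ≤ ENNReal.ofReal (2 * ∑' j, |lam j|) := by
  obtain ⟨hatom, hsum, hL1, -⟩ := hdec
  choose R _ ha using hatom
  set F := fun (N : ℕ) y => ∑ j ∈ Finset.range N, lam j * a j y
  have hF : ∀ N, Integrable (F N) ν := fun N =>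
    integrable_finsetSum _ fun j _ => (ha j).integrable.const_mul _
  have hlim : ∀ x, Tendsto (fun N => ‖hardyOp ν (F N) x‖ₑ) atTop (𝓝 ‖hardyOp ν f x‖ₑ) :=
    fun x => (continuous_enorm.tendsto _).comp
      (tendsto_hardyOp_of_tendsto_eLpNorm_one hf hF hL1 x)
  have hpartial : ∀ N, ∫⁻ x, ‖hardyOp ν (F N) x‖ₑ ∂ν ≤ ENNReal.ofReal (2 * ∑' j, |lam j|) :=
    fun N => calc ∫⁻ x, ‖hardyOp ν (F N) x‖ₑ ∂ν ≤ 2 * ∑ j ∈ Finset.range N, ‖lam j‖ₑ :=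
          lintegral_enorm_hardyOp_sum_atoms_le _ lam fun j _ => ha j
      _ ≤ 2 * ∑' j, ‖lam j‖ₑ := by gcongr; exact ENNReal.sum_le_tsum _
      _ = ENNReal.ofReal (2 * ∑' j, |lam j|) := by
        rw [ENNReal.ofReal_mul zero_le_two,
          ENNReal.ofReal_tsum_of_nonneg (fun j => abs_nonneg _) hsum]
        simp [Real.enorm_eq_ofReal_abs]
  calc ∫⁻ x, ‖hardyOp ν f x‖ₑ ∂ν = ∫⁻ x, liminf (fun N => ‖hardyOp ν (F N) x‖ₑ) atTop ∂ν :=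
        lintegral_congr fun x => (hlim x).liminf_eq.symm
    _ ≤ liminf (fun N => ∫⁻ x, ‖hardyOp ν (F N) x‖ₑ ∂ν) atTop :=
        lintegral_liminf_le fun N => (measurable_hardyOp (hF N)).enorm
    _ ≤ ENNReal.ofReal (2 * ∑' j, |lam j|) :=
        liminf_le_of_frequently_le (Frequently.of_forall hpartial)

end HardyOperator

theorem eLpNorm_one_hardyOp_le_H1norm_general {d : ℕ}
    (Rp : Finset (EuclideanSpace ℝ (Fin d)))
    (k : EuclideanSpace ℝ (Fin d) → ℝ)
    (f : EuclideanSpace ℝ (Fin d) → ℝ) (hf : MemH1O (dunklMeasure Rp k) f) :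
    eLpNorm (hardyOp (dunklMeasure Rp k) f) 1 (dunklMeasure Rp k)
      ≤ ENNReal.ofReal (2 * H1normO (dunklMeasure Rp k) f) := by
  obtain ⟨hf1, -, lam₀, a₀, hdec₀⟩ := hf
  have hbound := fun lam a (hdec : IsAtomicDecompO _ f lam a) =>
    hdec.lintegral_enorm_hardyOp_le (memLp_one_iff_integrable.mp hf1)
  rw [eLpNorm_one_eq_lintegral_enorm]
  set I := ∫⁻ x, ‖hardyOp (dunklMeasure Rp k) f x‖ₑ ∂dunklMeasure Rp k
  have hI : I ≠ ⊤ := ne_top_of_le_ne_top ENNReal.ofReal_ne_top (hbound _ _ hdec₀)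
  have hIinf : I.toReal / 2 ≤ H1normO (dunklMeasure Rp k) f := by
    refine le_csInf ⟨_, lam₀, a₀, hdec₀, rfl⟩ ?_
    rintro _ ⟨lam, a, hdec, rfl⟩
    have := ENNReal.toReal_le_of_le_ofReal (by positivity) (hbound lam a hdec)
    linarith
  rw [← ENNReal.ofReal_toReal hI]
  exact ENNReal.ofReal_le_ofReal (by linarith)

/-- For every `f ∈ H¹_k(ℝ^d)`, `‖H_k f‖_{L¹(ν_k)} ≤ 2 ‖f‖_{H¹_k}`. -/
theorem eLpNorm_one_hardyOp_le_H1norm {d : ℕ} (hd : 0 < d)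
    (Rp : Finset (EuclideanSpace ℝ (Fin d))) (hRp : ∀ ξ ∈ Rp, ξ ≠ 0)
    (k : EuclideanSpace ℝ (Fin d) → ℝ) (hk : ∀ ξ ∈ Rp, 0 ≤ k ξ)
    (f : EuclideanSpace ℝ (Fin d) → ℝ) (hf : MemH1O (dunklMeasure Rp k) f) :
    eLpNorm (hardyOp (dunklMeasure Rp k) f) 1 (dunklMeasure Rp k)
      ≤ ENNReal.ofReal (2 * H1normO (dunklMeasure Rp k) f) :=
  eLpNorm_one_hardyOp_le_H1norm_general Rp k f hf
end
end

section
/- Let $G$ be a finite subgroup of the orthogonal group of $\mathbb{R}^d$ leaving the weight $w_k$ invariant (so that $\nu_k$ is $G$-invariant), and assume $\nu_k$ is doubling, i.e., there is $c_0 > 0$ with $\nu_k(B(x,2r)) \leq c_0\, \nu_k(B(x,r))$ for all $x$ and $r > 0$. Let $T$ be a linear operator bounded on $L^2(\nu_k)$ with $\|Tf\|_{L^2(\nu_k)} \leq M \|f\|_{L^2(\nu_k)}$, and let $K : \mathbb{R}^d \times \mathbb{R}^d \to \mathbb{R}$ be a measurable kernel such that: (i) for every compactly supported $f \in L^2(\nu_k)$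 and every $x$ with $g\cdot x \notin \mathrm{supp}(f)$ for all $g \in G$, $Tf(x) = \int_{\mathbb{R}^d} K(x,y) f(y)\, d\nu_k(y)$; and (ii) there is $A > 0$ with $\int_{\{x : \min_{g \in G}\|g\cdot x - y\| > 2\|y - y_0\|\}} |K(x,y) - K(x,y_0)|\, d\nu_k(x) \leq A$ for all $y, y_0 \in \mathbb{R}^d$. Then there is a constant $c > 0$ (depending only on $M$, $A$, $c_0$ and the order of $G$) such that $\|Ta\|_{L^1(\nu_k)} \leq c$ for every $L^2_k$-atom $a$. -/
open MeasureTheory Metric Filter Topology Set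
open scoped ENNReal

noncomputable section

/-!
Split `ℝ^d` into the union `O` of the `G`-images of the ball `B(x₀, 3r)` and its complement.
On `O`, Cauchy–Schwarz and the `L²` bound give `‖T a‖_{L¹(O)} ≤ ν(O)^{1/2} M ‖a‖₂`, and
`ν(O) ≤ |G| c₀² ν(B(x₀, r))` by `G`-invariance and doubling. Off `O`, the kernel representation
and the cancellation `∫ a = 0` give `T a(x) = ∫ (K(x,y) - K(x,x₀)) a(y) dν(y)`; Tonelli and the
Hörmander condition then bound the integral by `A ‖a‖₁ ≤ A`.
-/
theorem setLIntegral_enorm_le_measure_rpow_mul_eLpNorm_two {α E : Type*} [MeasurableSpace α]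
    [NormedAddCommGroup E] (μ : Measure α) (f : α → E) (s : Set α) :
    ∫⁻ x in s, ‖f x‖ₑ ∂μ ≤ μ s ^ (1 / 2 : ℝ) * eLpNorm f 2 μ := by
  obtain ⟨g, hg, hgf, hg_eq⟩ :=
    exists_measurable_le_lintegral_eq (μ.restrict s) fun x => ‖f x‖ₑ
  have hCS := ENNReal.lintegral_mul_le_Lp_mul_Lq (μ.restrict s) Real.HolderConjugate.two_two
    aemeasurable_const hg.aemeasurable (f := 1)
  calc ∫⁻ x in s, ‖f x‖ₑ ∂μ = ∫⁻ x in s, 1 * g x ∂μ := by simp [hg_eq]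
    _ ≤ μ s ^ (1 / 2 : ℝ) * (∫⁻ x in s, g x ^ (2 : ℝ) ∂μ) ^ (1 / 2 : ℝ) := by
      simpa using hCS
    _ ≤ μ s ^ (1 / 2 : ℝ) * (∫⁻ x, ‖f x‖ₑ ^ (2 : ℝ) ∂μ) ^ (1 / 2 : ℝ) := by
      gcongr
      exacts [Measure.restrict_le_self, hgf _]
    _ = μ s ^ (1 / 2 : ℝ) * eLpNorm f 2 μ := by
      rw [eLpNorm_eq_lintegral_rpow_enorm_toReal two_ne_zero ENNReal.ofNat_ne_top]
      norm_num

theorem measure_closedBall_three_mul_le {X : Type*} [PseudoMetricSpace X] [MeasurableSpace X]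
    {μ : Measure X} {C : ℝ≥0∞}
    (hμ : ∀ x (r : ℝ), 0 < r → μ (closedBall x (2 * r)) ≤ C * μ (closedBall x r))
    (x : X) {r : ℝ} (hr : 0 < r) :
    μ (closedBall x (3 * r)) ≤ C ^ 2 * μ (closedBall x r) :=
  calc μ (closedBall x (3 * r)) ≤ μ (closedBall x (2 * (2 * r))) :=
        measure_mono (closedBall_subset_closedBall (by linarith))
    _ ≤ C * (C * μ (closedBall x r)) :=
        (hμ x _ (by positivity)).trans (mul_le_mul_right (hμ x r hr) _)
    _ = C ^ 2 * μ (closedBall x r) := by ring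

theorem measure_biUnion_preimage_le {α ι : Type*} [MeasurableSpace α] {μ : Measure α}
    {I : Set ι} (hI : I.Finite) {f : ι → α → α} {S : Set α}
    (hf : ∀ i ∈ I, μ (f i ⁻¹' S) = μ S) :
    μ (⋃ i ∈ I, f i ⁻¹' S) ≤ hI.toFinset.card * μ S :=
  calc μ (⋃ i ∈ I, f i ⁻¹' S) = μ (⋃ i ∈ hI.toFinset, f i ⁻¹' S) := by simp
    _ ≤ ∑ i ∈ hI.toFinset, μ (f i ⁻¹' S) := measure_biUnion_finset_le _ _
    _ = hI.toFinset.card * μ S := by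
      rw [Finset.sum_congr rfl fun i hi => hf i (hI.mem_toFinset.1 hi), Finset.sum_const,
        nsmul_eq_mul]

theorem MeasureTheory.MeasurePreserving.withDensity_of_comp_eq {α : Type*}
    [MeasurableSpace α] {μ : Measure α} {f : α → α} (hf : MeasurePreserving f μ μ)
    (hfe : MeasurableEmbedding f) {ρ : α → ℝ≥0∞} (hρ : ∀ x, ρ (f x) = ρ x) :
    MeasurePreserving f (μ.withDensity ρ) (μ.withDensity ρ) := by
  refine ⟨hf.measurable, Measure.ext fun s hs => ?_⟩
  rw [hfe.map_apply, withDensity_apply _ hs, withDensity_apply _ (hf.measurable hs)]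
  simpa only [hρ] using hf.setLIntegral_comp_preimage_emb hfe ρ s

theorem enorm_integral_mul_le_lintegral_sub_mul {α : Type*} [MeasurableSpace α]
    {μ : Measure α} {a : α → ℝ} (ha : Integrable a μ) (ha0 : ∫ y, a y ∂μ = 0)
    (k : α → ℝ) (c : ℝ) :
    ‖∫ y, k y * a y ∂μ‖ₑ ≤ ∫⁻ y, ‖k y - c‖ₑ * ‖a y‖ₑ ∂μ := by
  by_cases hka : Integrable (fun y => k y * a y) μ
  · have hsub : ∫ y, k y * a y ∂μ = ∫ y, (k y - c) * a y ∂μ := by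
      simp_rw [sub_mul]
      rw [integral_sub hka (ha.const_mul c), integral_const_mul, ha0, mul_zero, sub_zero]
    rw [hsub]
    simpa only [enorm_mul] using enorm_integral_le_lintegral_enorm fun y => (k y - c) * a y
  · simp [integral_undef hka]

theorem setLIntegral_enorm_integral_kernel_le {α : Type*} [MeasurableSpace α]
    {ν : Measure α} [SFinite ν] {K : α → α → ℝ} (hK : Measurable (Function.uncurry K))
    {a : α → ℝ} (ha : Integrable a ν) (ha0 : ∫ y, a y ∂ν = 0) {B S : Set α} {y₀ : α}
    {C : ℝ≥0∞} (hsupp : Function.support a ⊆ B)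
    (hH : ∀ y ∈ B, ∫⁻ x in S, ‖K x y - K x y₀‖ₑ ∂ν ≤ C) :
    ∫⁻ x in S, ‖∫ y, K x y * a y ∂ν‖ₑ ∂ν ≤ C * ∫⁻ y, ‖a y‖ₑ ∂ν := by
  have hK₀ : Measurable fun p : α × α => K p.1 p.2 - K p.1 y₀ :=
    hK.sub (hK.comp (measurable_fst.prodMk measurable_const))
  calc ∫⁻ x in S, ‖∫ y, K x y * a y ∂ν‖ₑ ∂ν
      ≤ ∫⁻ x in S, ∫⁻ y, ‖K x y - K x y₀‖ₑ * ‖a y‖ₑ ∂ν ∂ν :=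
        lintegral_mono fun x => enorm_integral_mul_le_lintegral_sub_mul ha ha0 _ _
    _ = ∫⁻ y, ∫⁻ x in S, ‖K x y - K x y₀‖ₑ * ‖a y‖ₑ ∂ν ∂ν :=
        lintegral_lintegral_swap (hK₀.enorm.aemeasurable.mul ha.aemeasurable.enorm.comp_snd)
    _ = ∫⁻ y, (∫⁻ x in S, ‖K x y - K x y₀‖ₑ ∂ν) * ‖a y‖ₑ ∂ν := by
        refine lintegral_congr fun y => lintegral_mul_const _ ?_
        exact (hK₀.comp (measurable_id.prodMk measurable_const)).enorm
    _ ≤ ∫⁻ y, C * ‖a y‖ₑ ∂ν := by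
        refine lintegral_mono fun y => ?_
        by_cases hy : y ∈ B
        · exact mul_le_mul_left (hH y hy) _
        · simp [Function.notMem_support.1 fun h => hy (hsupp h)]
    _ = C * ∫⁻ y, ‖a y‖ₑ ∂ν := lintegral_const_mul'' _ ha.aemeasurable.enorm

theorem two_mul_norm_sub_lt_norm_sub {E : Type*} [SeminormedAddCommGroup E] {x₀ y z : E}
    {r : ℝ} (hy : y ∈ closedBall x₀ r) (hz : z ∉ closedBall x₀ (3 * r)) :
    2 * ‖y - x₀‖ < ‖z - y‖ := by
  rw [mem_closedBall, dist_eq_norm] at hy hz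
  linarith [norm_sub_le_norm_sub_add_norm_sub z y x₀]

section Dunkl

variable {d : ℕ} {Rp : Finset (EuclideanSpace ℝ (Fin d))} {k : EuclideanSpace ℝ (Fin d) → ℝ}

theorem continuous_dunklWeight (hk : ∀ ξ ∈ Rp, 0 ≤ k ξ) : Continuous (dunklWeight Rp k) :=
  continuous_finsetProd _ fun ξ hξ => (continuous_const.inner continuous_id).abs.rpow_const
    fun _ => Or.inr (by linarith [hk ξ hξ])

theorem isLocallyFiniteMeasure_dunklMeasure (hk : ∀ ξ ∈ Rp, 0 ≤ k ξ) :
    IsLocallyFiniteMeasure (dunklMeasure Rp k) :=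
  .withDensity_ofReal (continuous_dunklWeight hk)

theorem measurePreserving_dunklMeasure
    (g : EuclideanSpace ℝ (Fin d) ≃ₗᵢ[ℝ] EuclideanSpace ℝ (Fin d))
    (hg : ∀ x, dunklWeight Rp k (g x) = dunklWeight Rp k x) :
    MeasurePreserving g (dunklMeasure Rp k) (dunklMeasure Rp k) :=
  g.measurePreserving.withDensity_of_comp_eq g.toMeasurableEquiv.measurableEmbedding
    fun x => by rw [hg]

theorem dunklMeasure_biUnion_preimage_closedBall_le
    {G : Set (EuclideanSpace ℝ (Fin d) ≃ₗᵢ[ℝ] EuclideanSpace ℝ (Fin d))} (hG : G.Finite)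
    (hGinv : ∀ g ∈ G, ∀ x, dunklWeight Rp k (g x) = dunklWeight Rp k x) {C : ℝ≥0∞}
    (hdoubling : ∀ (x : EuclideanSpace ℝ (Fin d)) (r : ℝ), 0 < r →
      dunklMeasure Rp k (closedBall x (2 * r)) ≤ C * dunklMeasure Rp k (closedBall x r))
    (x₀ : EuclideanSpace ℝ (Fin d)) {r : ℝ} (hr : 0 < r) :
    dunklMeasure Rp k (⋃ g ∈ G, ⇑g ⁻¹' closedBall x₀ (3 * r))
      ≤ hG.toFinset.card * C ^ 2 * dunklMeasure Rp k (closedBall x₀ r) := by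
  rw [mul_assoc]
  refine (measure_biUnion_preimage_le hG fun g hg => ?_).trans ?_
  · exact (measurePreserving_dunklMeasure g (hGinv g hg)).measure_preimage
      measurableSet_closedBall.nullMeasurableSet
  · gcongr
    exact measure_closedBall_three_mul_le hdoubling x₀ hr

end Dunkl

namespace IsL2Atom

variable {d : ℕ} {ν : Measure (EuclideanSpace ℝ (Fin d))} {a : EuclideanSpace ℝ (Fin d) → ℝ}
  {x₀ : EuclideanSpace ℝ (Fin d)} {r : ℝ}

theorem eq_zero_of_notMem (ha : IsL2Atom ν a x₀ r) {x : EuclideanSpace ℝ (Fin d)}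
    (hx : x ∉ closedBall x₀ r) : a x = 0 :=
  Function.notMem_support.1 fun h => hx (ha.2.1 h)

theorem hasCompactSupport (ha : IsL2Atom ν a x₀ r) : HasCompactSupport a :=
  .intro (isCompact_closedBall x₀ r) fun _ => ha.eq_zero_of_notMem

theorem integrable_s7 (ha : IsL2Atom ν a x₀ r) (hB : ν (closedBall x₀ r) ≠ ⊤) : Integrable a ν :=
  memLp_one_iff_integrable.1 <|
    ha.1.mono_exponent_of_measure_support_ne_top (fun _ => ha.eq_zero_of_notMem) hB one_le_two

theorem integral_eq_zero (ha : IsL2Atom ν a x₀ r) : ∫ x, a x ∂ν = 0 :=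
  (setIntegral_eq_integral_of_forall_compl_eq_zero fun _ => ha.eq_zero_of_notMem).symm.trans
    ha.2.2.2

theorem measure_rpow_mul_eLpNorm_le_one (ha : IsL2Atom ν a x₀ r)
    (hB : ν (closedBall x₀ r) ≠ ⊤) :
    ν (closedBall x₀ r) ^ (1 / 2 : ℝ) * eLpNorm a 2 ν ≤ 1 := by
  obtain ⟨haL2, -, hnorm, -⟩ := ha
  set μB := ν (closedBall x₀ r)
  have hE : eLpNorm a 2 ν ≤ ENNReal.ofReal (μB.toReal ^ (-(1 : ℝ) / 2)) := by
    rw [haL2.eLpNorm_eq_integral_rpow_norm two_ne_zero ENNReal.ofNat_ne_top]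
    refine ENNReal.ofReal_le_ofReal (le_trans (le_of_eq ?_) hnorm)
    norm_num [Real.norm_eq_abs]
  rcases eq_or_ne μB 0 with h0 | h0
  · simp [h0]
  calc μB ^ (1 / 2 : ℝ) * eLpNorm a 2 ν
      ≤ μB ^ (1 / 2 : ℝ) * ENNReal.ofReal (μB.toReal ^ (-(1 : ℝ) / 2)) := by gcongr
    _ = 1 := by
      rw [← ENNReal.ofReal_rpow_of_pos (ENNReal.toReal_pos h0 hB), ENNReal.ofReal_toReal hB,
        ← ENNReal.rpow_add _ _ h0 hB]
      norm_num

theorem lintegral_enorm_le_one (ha : IsL2Atom ν a x₀ r) (hB : ν (closedBall x₀ r) ≠ ⊤) :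
    ∫⁻ x, ‖a x‖ₑ ∂ν ≤ 1 :=
  calc ∫⁻ x, ‖a x‖ₑ ∂ν = ∫⁻ x in closedBall x₀ r, ‖a x‖ₑ ∂ν :=
        (setLIntegral_eq_of_support_subset (by simpa using ha.2.1)).symm
    _ ≤ ν (closedBall x₀ r) ^ (1 / 2 : ℝ) * eLpNorm a 2 ν :=
        setLIntegral_enorm_le_measure_rpow_mul_eLpNorm_two ν a _
    _ ≤ 1 := ha.measure_rpow_mul_eLpNorm_le_one hB

theorem setLIntegral_enorm_le_of_eLpNorm_two_le (ha : IsL2Atom ν a x₀ r)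
    (hB : ν (closedBall x₀ r) ≠ ⊤) {f : EuclideanSpace ℝ (Fin d) → ℝ} {M : ℝ≥0∞}
    (hf : eLpNorm f 2 ν ≤ M * eLpNorm a 2 ν) {O : Set (EuclideanSpace ℝ (Fin d))} {C : ℝ≥0∞}
    (hO : ν O ≤ C * ν (closedBall x₀ r)) :
    ∫⁻ x in O, ‖f x‖ₑ ∂ν ≤ C ^ (1 / 2 : ℝ) * M :=
  calc ∫⁻ x in O, ‖f x‖ₑ ∂ν ≤ ν O ^ (1 / 2 : ℝ) * eLpNorm f 2 ν :=
        setLIntegral_enorm_le_measure_rpow_mul_eLpNorm_two ν f O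
    _ ≤ (C * ν (closedBall x₀ r)) ^ (1 / 2 : ℝ) * (M * eLpNorm a 2 ν) := by gcongr
    _ = C ^ (1 / 2 : ℝ) * M * (ν (closedBall x₀ r) ^ (1 / 2 : ℝ) * eLpNorm a 2 ν) := by
        rw [ENNReal.mul_rpow_of_nonneg _ _ (by norm_num)]
        ring
    _ ≤ C ^ (1 / 2 : ℝ) * M := mul_le_of_le_one_right' (ha.measure_rpow_mul_eLpNorm_le_one hB)

theorem setLIntegral_enorm_integral_kernel_le (ha : IsL2Atom ν a x₀ r)
    (hB : ν (closedBall x₀ r) ≠ ⊤) [SFinite ν]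
    {K : EuclideanSpace ℝ (Fin d) → EuclideanSpace ℝ (Fin d) → ℝ}
    (hK : Measurable (Function.uncurry K)) {S : Set (EuclideanSpace ℝ (Fin d))} {C : ℝ≥0∞}
    (hH : ∀ y ∈ closedBall x₀ r, ∫⁻ x in S, ‖K x y - K x x₀‖ₑ ∂ν ≤ C) :
    ∫⁻ x in S, ‖∫ y, K x y * a y ∂ν‖ₑ ∂ν ≤ C :=
  (_root_.setLIntegral_enorm_integral_kernel_le hK (ha.integrable_s7 hB) ha.integral_eq_zero
    ha.2.1 hH).trans (mul_le_of_le_one_right' (ha.lintegral_enorm_le_one hB))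

end IsL2Atom

theorem atom_L1_bound_of_CZ_kernel_general {d : ℕ}
    (Rp : Finset (EuclideanSpace ℝ (Fin d)))
    (k : EuclideanSpace ℝ (Fin d) → ℝ) (hk : ∀ ξ ∈ Rp, 0 ≤ k ξ)
    (G : Subgroup (EuclideanSpace ℝ (Fin d) ≃ₗᵢ[ℝ] EuclideanSpace ℝ (Fin d)))
    (hGfin : (G : Set (EuclideanSpace ℝ (Fin d) ≃ₗᵢ[ℝ] EuclideanSpace ℝ (Fin d))).Finite)
    (hGinv : ∀ g ∈ G, ∀ x, dunklWeight Rp k (g x) = dunklWeight Rp k x)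
    (c₀ : ℝ) (hc₀ : 0 < c₀)
    (hdoubling : ∀ (x : EuclideanSpace ℝ (Fin d)) (r : ℝ), 0 < r →
      (dunklMeasure Rp k) (closedBall x (2 * r))
        ≤ ENNReal.ofReal c₀ * (dunklMeasure Rp k) (closedBall x r))
    (T : (EuclideanSpace ℝ (Fin d) → ℝ) →ₗ[ℝ] (EuclideanSpace ℝ (Fin d) → ℝ))
    (M : ℝ) (hM : 0 < M)
    (hL2 : ∀ f : EuclideanSpace ℝ (Fin d) → ℝ, MemLp f 2 (dunklMeasure Rp k) →
      eLpNorm (T f) 2 (dunklMeasure Rp k) ≤ ENNReal.ofReal M * eLpNorm f 2 (dunklMeasure Rp k))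
    (K : EuclideanSpace ℝ (Fin d) → EuclideanSpace ℝ (Fin d) → ℝ)
    (hKmeas : Measurable (Function.uncurry K))
    (hrepr : ∀ f : EuclideanSpace ℝ (Fin d) → ℝ, MemLp f 2 (dunklMeasure Rp k) →
      HasCompactSupport f → ∀ x : EuclideanSpace ℝ (Fin d),
        (∀ g ∈ G, g x ∉ Function.support f) →
          T f x = ∫ y, K x y * f y ∂(dunklMeasure Rp k))
    (A : ℝ) (hA : 0 < A)
    (hHormander : ∀ y y₀ : EuclideanSpace ℝ (Fin d),
      ∫⁻ x in {x : EuclideanSpace ℝ (Fin d) | ∀ g ∈ G, 2 * ‖y - y₀‖ < ‖g x - y‖},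
          ENNReal.ofReal |K x y - K x y₀| ∂(dunklMeasure Rp k) ≤ ENNReal.ofReal A) :
    ∃ c : ℝ, 0 < c ∧ ∀ (a : EuclideanSpace ℝ (Fin d) → ℝ)
      (x₀ : EuclideanSpace ℝ (Fin d)) (r : ℝ), 0 < r →
        IsL2Atom (dunklMeasure Rp k) a x₀ r →
          eLpNorm (T a) 1 (dunklMeasure Rp k) ≤ ENNReal.ofReal c := by
  set ν := dunklMeasure Rp k
  have := isLocallyFiniteMeasure_dunklMeasure hk
  set N := hGfin.toFinset.card
  refine ⟨√(N * c₀ ^ 2) * M + A, by positivity, fun a x₀ r hr ha => ?_⟩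
  have hB : ν (closedBall x₀ r) ≠ ⊤ := measure_closedBall_lt_top.ne
  set O := ⋃ g ∈ (G : Set (EuclideanSpace ℝ (Fin d) ≃ₗᵢ[ℝ] EuclideanSpace ℝ (Fin d))),
    ⇑g ⁻¹' closedBall x₀ (3 * r)
  have hO : MeasurableSet O :=
    .biUnion hGfin.countable fun g _ => measurableSet_closedBall.preimage g.continuous.measurable
  have hOc : ∀ x ∈ Oᶜ, ∀ g ∈ G, g x ∉ closedBall x₀ (3 * r) :=
    fun x hx g hg hgx => hx (mem_iUnion₂.2 ⟨g, hg, hgx⟩)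
  have hloc := ha.setLIntegral_enorm_le_of_eLpNorm_two_le hB (hL2 a ha.1)
    (dunklMeasure_biUnion_preimage_closedBall_le hGfin hGinv hdoubling x₀ hr)
  have hfar : ∫⁻ x in Oᶜ, ‖T a x‖ₑ ∂ν ≤ ENNReal.ofReal A := by
    rw [setLIntegral_congr_fun hO.compl fun x hx => by
      rw [hrepr a ha.1 ha.hasCompactSupport x fun g hg h =>
        hOc x hx g hg (closedBall_subset_closedBall (by linarith) (ha.2.1 h))]]
    refine ha.setLIntegral_enorm_integral_kernel_le hB hKmeas fun y hy =>
      le_trans ?_ (hHormander y x₀)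
    simp only [Real.enorm_eq_ofReal_abs]
    exact lintegral_mono_set fun x hx g hg => two_mul_norm_sub_lt_norm_sub hy (hOc x hx g hg)
  calc eLpNorm (T a) 1 ν = ∫⁻ x in O, ‖T a x‖ₑ ∂ν + ∫⁻ x in Oᶜ, ‖T a x‖ₑ ∂ν := by
        rw [eLpNorm_one_eq_lintegral_enorm, lintegral_add_compl _ hO]
    _ ≤ (N * ENNReal.ofReal c₀ ^ 2) ^ (1 / 2 : ℝ) * ENNReal.ofReal M + ENNReal.ofReal A :=
        add_le_add hloc hfar
    _ = ENNReal.ofReal (√(N * c₀ ^ 2) * M + A) := by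
        rw [← ENNReal.ofReal_natCast, ← ENNReal.ofReal_pow hc₀.le,
          ← ENNReal.ofReal_mul (by positivity),
          ENNReal.ofReal_rpow_of_nonneg (by positivity) (by norm_num), ← Real.sqrt_eq_rpow,
          ← ENNReal.ofReal_mul (by positivity), ← ENNReal.ofReal_add (by positivity) hA.le]

/-- Abstract form of Lemma 3.1: if `T` is `L²(ν_k)`-bounded and has, away from the `G`-orbit of
the support, an integral representation by a kernel `K` satisfying the Hörmander-type condition
adapted to the finite group `G` of isometries leaving `w_k` invariant, and if `ν_k` is doubling,
then `‖T a‖_{L¹(ν_k)}` is bounded by a constant uniformly over all `L²_k`-atoms `a`. -/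
theorem atom_L1_bound_of_CZ_kernel {d : ℕ} (hd : 0 < d)
    (Rp : Finset (EuclideanSpace ℝ (Fin d))) (hRp : ∀ ξ ∈ Rp, ξ ≠ 0)
    (k : EuclideanSpace ℝ (Fin d) → ℝ) (hk : ∀ ξ ∈ Rp, 0 ≤ k ξ)
    (G : Subgroup (EuclideanSpace ℝ (Fin d) ≃ₗᵢ[ℝ] EuclideanSpace ℝ (Fin d)))
    (hGfin : (G : Set (EuclideanSpace ℝ (Fin d) ≃ₗᵢ[ℝ] EuclideanSpace ℝ (Fin d))).Finite)
    (hGinv : ∀ g ∈ G, ∀ x, dunklWeight Rp k (g x) = dunklWeight Rp k x)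
    (c₀ : ℝ) (hc₀ : 0 < c₀)
    (hdoubling : ∀ (x : EuclideanSpace ℝ (Fin d)) (r : ℝ), 0 < r →
      (dunklMeasure Rp k) (closedBall x (2 * r))
        ≤ ENNReal.ofReal c₀ * (dunklMeasure Rp k) (closedBall x r))
    (T : (EuclideanSpace ℝ (Fin d) → ℝ) →ₗ[ℝ] (EuclideanSpace ℝ (Fin d) → ℝ))
    (M : ℝ) (hM : 0 < M)
    (hL2 : ∀ f : EuclideanSpace ℝ (Fin d) → ℝ, MemLp f 2 (dunklMeasure Rp k) →
      eLpNorm (T f) 2 (dunklMeasure Rp k) ≤ ENNReal.ofReal M * eLpNorm f 2 (dunklMeasure Rp k))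
    (K : EuclideanSpace ℝ (Fin d) → EuclideanSpace ℝ (Fin d) → ℝ)
    (hKmeas : Measurable (Function.uncurry K))
    (hrepr : ∀ f : EuclideanSpace ℝ (Fin d) → ℝ, MemLp f 2 (dunklMeasure Rp k) →
      HasCompactSupport f → ∀ x : EuclideanSpace ℝ (Fin d),
        (∀ g ∈ G, g x ∉ Function.support f) →
          T f x = ∫ y, K x y * f y ∂(dunklMeasure Rp k))
    (A : ℝ) (hA : 0 < A)
    (hHormander : ∀ y y₀ : EuclideanSpace ℝ (Fin d),
      ∫⁻ x in {x : EuclideanSpace ℝ (Fin d) | ∀ g ∈ G, 2 * ‖y - y₀‖ < ‖g x - y‖},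
          ENNReal.ofReal |K x y - K x y₀| ∂(dunklMeasure Rp k) ≤ ENNReal.ofReal A) :
    ∃ c : ℝ, 0 < c ∧ ∀ (a : EuclideanSpace ℝ (Fin d) → ℝ)
      (x₀ : EuclideanSpace ℝ (Fin d)) (r : ℝ), 0 < r →
        IsL2Atom (dunklMeasure Rp k) a x₀ r →
          eLpNorm (T a) 1 (dunklMeasure Rp k) ≤ ENNReal.ofReal c :=
  atom_L1_bound_of_CZ_kernel_general Rp k hk G hGfin hGinv c₀ hc₀ hdoubling T M hM hL2 K hKmeas
    hrepr A hA hHormander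
end
end
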